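/- arXiv:2006.13754 — 2 statements merged into one kernel-verified Lean document; each statement's English description precedes it below -/
import Mathlib

section
/- Let f : 2^[n] → ℝ be a non-negative, second-order submodular set function with f(∅) = 0. Then for every R ⊆ [n], Σ_{i∈R} B_i(R) ≤ 2·f(R). -/
open Finset

/-- First-order difference `B_i(S)`. -/
def Bdiff {n : ℕ} (f : Finset (Fin n) → ℝ) (i : Fin n) (S : Finset (Fin n)) : ℝ :=
  f (insert i S) - f (S.erase i)

/-- Second-order difference `A_{ij}(S)`. -/
def Adiff {n : ℕ} (f : Finset (Fin n) → ℝ) (i j : Fin n) (S : Finset (Fin n)) : ℝ :=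
  f (insert j (insert i S)) - f ((insert i S).erase j)
    - f (insert j (S.erase i)) + f ((S.erase i).erase j)

lemma Bdiff_insert_self {n : ℕ} (f : Finset (Fin n) → ℝ) (j : Fin n) (S : Finset (Fin n)) :
    Bdiff f j (insert j S) = Bdiff f j S := by
  simp [Bdiff, Finset.insert_idem, Finset.erase_insert_eq_erase]

lemma Adiff_eq {n : ℕ} (f : Finset (Fin n) → ℝ) (i j : Fin n) (S : Finset (Fin n)) :
    Adiff f i j S = Bdiff f j (insert i S) - Bdiff f j (S.erase i) := by
  simp only [Adiff, Bdiff]; ring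

lemma Adiff_symm {n : ℕ} (f : Finset (Fin n) → ℝ) {i j : Fin n} (hij : i ≠ j)
    (S : Finset (Fin n)) : Adiff f i j S = Adiff f j i S := by
  unfold Adiff
  rw [Finset.insert_comm, Finset.erase_insert_of_ne hij,
    Finset.erase_insert_of_ne hij.symm, Finset.erase_right_comm]
  ring

lemma Adiff_insert_snd {n : ℕ} (f : Finset (Fin n) → ℝ) {k j : Fin n} (hkj : k ≠ j)
    (T : Finset (Fin n)) : Adiff f k j (insert j T) = Adiff f k j T := by
  rw [Adiff_eq, Adiff_eq, Finset.insert_comm, Bdiff_insert_self,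
    Finset.erase_insert_of_ne (Ne.symm hkj), Bdiff_insert_self]

lemma sum_Adiff_le {n : ℕ} (f : Finset (Fin n) → ℝ)
    (h2nd : ∀ (i j k : Fin n) (S : Finset (Fin n)),
      Adiff f i j (insert k S) ≤ Adiff f i j (S.erase k)) :
    ∀ S : Finset (Fin n), ∀ k ∉ S,
      (∑ i ∈ S, Adiff f k i S) ≤ Bdiff f k S - Bdiff f k ∅ := by
  intro S
  induction S using Finset.induction_on with
  | empty => intro k _; simp
  | insert _ _ hjT ih =>
    rename_i j T
    intro k hk
    have hkT : k ∉ T := fun h => hk (Finset.mem_insert_of_mem h)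
    have hkj : k ≠ j := fun h => hk (h ▸ Finset.mem_insert_self j T)
    rw [Finset.sum_insert hjT]
    have h1 : ∀ i ∈ T, Adiff f k i (insert j T) ≤ Adiff f k i T := by
      intro i _
      have := h2nd k i j T
      rwa [Finset.erase_eq_of_notMem hjT] at this
    have h2 : (∑ i ∈ T, Adiff f k i (insert j T)) ≤ ∑ i ∈ T, Adiff f k i T :=
      Finset.sum_le_sum h1
    have h3 := ih k hkT
    have h4 : Adiff f k j (insert j T) = Adiff f k j T := Adiff_insert_snd f hkj T
    have h5 : Adiff f k j T = Bdiff f k (insert j T) - Bdiff f k T := by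
      rw [Adiff_symm f hkj, Adiff_eq, Finset.erase_eq_of_notMem hjT]
    linarith

/-- For a non-negative, second-order submodular set function with `f(∅) = 0`:
`∑_{i∈R} B_i(R) ≤ 2 f(R)`. -/
theorem secondOrderSubmodular_sum_marginals {n : ℕ}
    (f : Finset (Fin n) → ℝ)
    (hnonneg : ∀ S : Finset (Fin n), 0 ≤ f S) (hf0 : f ∅ = 0)
    (h2nd : ∀ (i j k : Fin n) (S : Finset (Fin n)),
      Adiff f i j (insert k S) ≤ Adiff f i j (S.erase k)) :
    ∀ R : Finset (Fin n), (∑ i ∈ R, Bdiff f i R) ≤ 2 * f R := by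
  intro R
  induction R using Finset.induction_on with
  | empty => simp [hf0]
  | insert _ _ hk ih =>
    rename_i k S
    rw [Finset.sum_insert hk]
    have hsum : ∀ i ∈ S, Bdiff f i (insert k S) = Bdiff f i S + Adiff f k i S := by
      intro i _
      rw [Adiff_eq, Finset.erase_eq_of_notMem hk]
      ring
    rw [Finset.sum_congr rfl hsum, Finset.sum_add_distrib]
    have hQ := sum_Adiff_le f h2nd S k hk
    have hB0 : Bdiff f k ∅ = f {k} := by simp [Bdiff, hf0]
    have hB0' : 0 ≤ Bdiff f k ∅ := hB0 ▸ hnonneg {k}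
    have hBk : Bdiff f k (insert k S) = Bdiff f k S := Bdiff_insert_self f k S
    have hBkS : Bdiff f k S = f (insert k S) - f S := by
      rw [Bdiff, Finset.erase_eq_of_notMem hk]
    linarith
end

section
/- Let f be a non-negative, monotone, γ-meta-submodular, second-order submodular set function, M = ([n], I) a matroid of rank r ≥ 2, T an optimum independent set, and S a base that is a (1 + ε/n²)-approximate local optimum under single-element swaps. Then f(T) ≤ ( 4γ²/(r−1) + γ·(4/(r−1) + 2 + o(1)) + 3 + o(1) )·f(S); in particular f(T) ≤ O(γ + γ²/r)·f(S). -/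
open Finset

variable {n : ℕ} {f : Finset (Fin n) → ℝ}

lemma b_nonneg (hmono : ∀ S T : Finset (Fin n), S ⊆ T → f S ≤ f T)
    (i : Fin n) (S : Finset (Fin n)) : 0 ≤ Bdiff f i S := by
  have := hmono (S.erase i) (insert i S)
    ((erase_subset _ _).trans (subset_insert _ _))
  simp only [Bdiff]; linarith

lemma b_mem (i : Fin n) {S : Finset (Fin n)} (h : i ∈ S) :
    Bdiff f i S = f S - f (S.erase i) := by
  simp [Bdiff, insert_eq_self.2 h]

lemma b_not_mem (i : Fin n) {S : Finset (Fin n)} (h : i ∉ S) :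
    Bdiff f i S = f (insert i S) - f S := by
  simp [Bdiff, erase_eq_of_notMem h]

lemma a_symm (i j : Fin n) (S : Finset (Fin n)) :
    Adiff f i j S = Adiff f j i S := by
  rcases eq_or_ne i j with rfl | hij
  · rfl
  · have h : (S.erase i).erase j = (S.erase j).erase i := by
      ext x; simp only [mem_erase]; tauto
    unfold Adiff
    rw [erase_insert_of_ne hij, erase_insert_of_ne hij.symm, Finset.insert_comm, h]
    ring

lemma a_step (h2nd : ∀ (i j k : Fin n) (S : Finset (Fin n)),
      Adiff f i j (insert k S) ≤ Adiff f i j (S.erase k))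
    (i j k : Fin n) (W : Finset (Fin n)) :
    Adiff f i j (insert k W) ≤ Adiff f i j W := by
  by_cases hk : k ∈ W
  · rw [insert_eq_self.2 hk]
  · have := h2nd i j k W
    rwa [erase_eq_of_notMem hk] at this

lemma a_union (h2nd : ∀ (i j k : Fin n) (S : Finset (Fin n)),
      Adiff f i j (insert k S) ≤ Adiff f i j (S.erase k))
    (i j : Fin n) (R X : Finset (Fin n)) :
    Adiff f i j (R ∪ X) ≤ Adiff f i j R := by
  classical
  induction X using Finset.induction_on with
  | empty => simp
  | @insert a X ha ih =>
      calc Adiff f i j (R ∪ insert a X) = Adiff f i j (insert a (R ∪ X)) := by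
            rw [union_insert]
        _ ≤ Adiff f i j (R ∪ X) := a_step h2nd _ _ _ _
        _ ≤ Adiff f i j R := ih

lemma a_antitone (h2nd : ∀ (i j k : Fin n) (S : Finset (Fin n)),
      Adiff f i j (insert k S) ≤ Adiff f i j (S.erase k))
    (i j : Fin n) {R R' : Finset (Fin n)} (h : R ⊆ R') :
    Adiff f i j R' ≤ Adiff f i j R := by
  have := a_union h2nd i j R (R' \ R)
  rwa [union_sdiff_of_subset h] at this

lemma bsucc {j k : Fin n} {R : Finset (Fin n)} (hj : j ∉ R) (hk : k ∉ R)
    (hjk : j ≠ k) : Bdiff f j (insert k R) = Bdiff f j R + Adiff f j k R := by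
  have h1 : j ∉ insert k R := by simp [hjk, hj]
  have h2 : k ∉ insert j R := by simp [hjk.symm, hk]
  unfold Bdiff Adiff
  rw [erase_eq_of_notMem h1, erase_eq_of_notMem h2, erase_eq_of_notMem hj,
    erase_eq_of_notMem hk, Finset.insert_comm k j]
  ring

lemma bsucc' {i a : Fin n} {S : Finset (Fin n)} (hi : i ∈ S) (ha : a ∉ S) :
    Bdiff f i (insert a S) = Bdiff f i S + Adiff f i a (S.erase i) := by
  have hai : a ≠ i := fun h => ha (h ▸ hi)
  have h1 : insert i (insert a S) = insert a S :=
    insert_eq_self.2 (mem_insert_of_mem hi)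
  have h2 : (S.erase i).erase i = S.erase i :=
    erase_eq_of_notMem (notMem_erase _ _)
  have h3 : (S.erase i).erase a = S.erase i :=
    erase_eq_of_notMem (fun h => ha (mem_of_mem_erase h))
  have h4 : S.erase a = S := erase_eq_of_notMem ha
  unfold Bdiff Adiff
  rw [h1, h2, h3, erase_insert_of_ne hai, insert_erase hi, insert_eq_self.2 hi, h4]
  ring

lemma sumA_le (hmono : ∀ S T : Finset (Fin n), S ⊆ T → f S ≤ f T)
    (h2nd : ∀ (i j k : Fin n) (S : Finset (Fin n)),
      Adiff f i j (insert k S) ≤ Adiff f i j (S.erase k)) :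
    ∀ (S : Finset (Fin n)) (a : Fin n), a ∉ S →
      ∑ i ∈ S, Adiff f i a (S.erase i) ≤ Bdiff f a S - Bdiff f a ∅ := by
  intro S
  induction S using Finset.induction_on with
  | empty => intro a _; simp
  | @insert b S hb ih =>
      intro a ha
      have haS : a ∉ S := fun h => ha (mem_insert_of_mem h)
      have hab : a ≠ b := fun h => ha (h ▸ mem_insert_self b S)
      rw [sum_insert hb, erase_insert hb]
      have hstep : ∀ i ∈ S, Adiff f i a ((insert b S).erase i) ≤ Adiff f i a (S.erase i) := by
        intro i hi
        have hbi : b ≠ i := fun h => hb (h ▸ hi)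
        rw [erase_insert_of_ne hbi]
        exact a_step h2nd _ _ _ _
      have hsum := Finset.sum_le_sum hstep
      have hIH := ih a haS
      have hAB : Adiff f b a S = Bdiff f a (insert b S) - Bdiff f a S := by
        rw [a_symm, bsucc haS hb hab]; ring
      linarith

lemma key_lemma (hnonneg : ∀ S : Finset (Fin n), 0 ≤ f S)
    (hmono : ∀ S T : Finset (Fin n), S ⊆ T → f S ≤ f T)
    (h2nd : ∀ (i j k : Fin n) (S : Finset (Fin n)),
      Adiff f i j (insert k S) ≤ Adiff f i j (S.erase k)) :
    ∀ S : Finset (Fin n), ∑ i ∈ S, Bdiff f i S ≤ 2 * f S := by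
  intro S
  induction S using Finset.induction_on with
  | empty =>
      simp only [Finset.sum_empty]
      linarith [hnonneg (∅ : Finset (Fin n))]
  | @insert a S ha ih =>
      rw [sum_insert ha]
      have h1 : ∀ i ∈ S, Bdiff f i (insert a S) = Bdiff f i S + Adiff f i a (S.erase i) :=
        fun i hi => bsucc' hi ha
      rw [Finset.sum_congr rfl h1, Finset.sum_add_distrib]
      have h2 := sumA_le hmono h2nd S a ha
      have h3 : Bdiff f a (insert a S) = f (insert a S) - f S := by
        rw [Bdiff, insert_eq_self.2 (mem_insert_self a S), erase_insert ha]
      have h4 : Bdiff f a S = f (insert a S) - f S := b_not_mem a ha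
      have h5 : 0 ≤ Bdiff f a ∅ := b_nonneg hmono a ∅
      linarith

lemma bF (h2nd : ∀ (i j k : Fin n) (S : Finset (Fin n)),
      Adiff f i j (insert k S) ≤ Adiff f i j (S.erase k))
    {a : Fin n} (S : Finset (Fin n)) :
    ∀ X : Finset (Fin n), a ∉ S → a ∉ X → (∀ k ∈ X, k ∉ S) →
      Bdiff f a (S ∪ X) ≤ Bdiff f a S + ∑ k ∈ X, Adiff f a k S := by
  intro X
  induction X using Finset.induction_on with
  | empty => intro _ _ _; simp
  | @insert b X hb ih =>
      intro haS haX hXS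
      have haX' : a ∉ X := fun h => haX (mem_insert_of_mem h)
      have hab : a ≠ b := fun h => haX (h ▸ mem_insert_self b X)
      have hbS : b ∉ S := hXS b (mem_insert_self b X)
      have hbSX : b ∉ S ∪ X := by simp [hbS, hb]
      have haSX : a ∉ S ∪ X := by simp [haS, haX']
      rw [union_insert, bsucc haSX hbSX hab, sum_insert hb]
      have h1 : Adiff f a b (S ∪ X) ≤ Adiff f a b S :=
        a_antitone h2nd _ _ subset_union_left
      have h2 := ih haS haX' (fun k hk => hXS k (mem_insert_of_mem hk))
      linarith

lemma growth {γ : ℝ} (hγ : 0 ≤ γ)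
    (hms : ∀ S : Finset (Fin n), S.Nonempty → ∀ i j : Fin n,
      (S.card : ℝ) * Adiff f i j S ≤ γ * (Bdiff f i S + Bdiff f j S))
    (h2nd : ∀ (i j k : Fin n) (S : Finset (Fin n)),
      Adiff f i j (insert k S) ≤ Adiff f i j (S.erase k))
    (S : Finset (Fin n)) (hS : S.Nonempty) :
    ∀ X : Finset (Fin n), (∀ k ∈ X, k ∉ S) →
      f (S ∪ X) ≤ f S + (1 + γ * ((X.card : ℝ) - 1) / S.card) * ∑ j ∈ X, Bdiff f j S := by
  have hs : (0 : ℝ) < S.card := by exact_mod_cast card_pos.2 hS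
  intro X
  induction X using Finset.induction_on with
  | empty => simp
  | @insert a X ha ih =>
      intro hXS
      have haS : a ∉ S := hXS a (mem_insert_self a X)
      have hXS' : ∀ k ∈ X, k ∉ S := fun k hk => hXS k (mem_insert_of_mem hk)
      have haSX : a ∉ S ∪ X := by simp [haS, ha]
      have e1 : f (S ∪ insert a X) = f (S ∪ X) + Bdiff f a (S ∪ X) := by
        rw [union_insert, b_not_mem a haSX]; ring
      have e2 := bF h2nd S X haS ha hXS'
      have e3 : ∑ k ∈ X, Adiff f a k S ≤
          γ / S.card * ((X.card : ℝ) * Bdiff f a S + ∑ k ∈ X, Bdiff f k S) := by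
        have hterm : ∀ k ∈ X, Adiff f a k S ≤ γ / S.card * (Bdiff f a S + Bdiff f k S) := by
          intro k hk
          have := hms S hS a k
          rw [div_mul_eq_mul_div, le_div_iff₀ hs]
          linarith [this]
        calc ∑ k ∈ X, Adiff f a k S
            ≤ ∑ k ∈ X, γ / S.card * (Bdiff f a S + Bdiff f k S) := Finset.sum_le_sum hterm
          _ = γ / S.card * ((X.card : ℝ) * Bdiff f a S + ∑ k ∈ X, Bdiff f k S) := by
              rw [← Finset.mul_sum, Finset.sum_add_distrib, sum_const, nsmul_eq_mul]
      have e4 := ih hXS'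
      have hcard : ((insert a X).card : ℝ) = (X.card : ℝ) + 1 := by
        rw [card_insert_of_notMem ha]; push_cast; ring
      rw [sum_insert ha, hcard]
      have hid : f S + (1 + γ * ((X.card : ℝ) + 1 - 1) / S.card) *
            (Bdiff f a S + ∑ j ∈ X, Bdiff f j S)
          = f S + (1 + γ * ((X.card : ℝ) - 1) / S.card) * ∑ j ∈ X, Bdiff f j S
            + Bdiff f a S
            + γ / S.card * ((X.card : ℝ) * Bdiff f a S + ∑ k ∈ X, Bdiff f k S) := by
        field_simp
        ring
      rw [hid]
      linarith


section Matroid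
variable {n : ℕ} (Indep : Finset (Fin n) → Prop)

lemma augment_aux
    (hexch : ∀ X Y : Finset (Fin n), Indep X → Indep Y → X.card < Y.card →
      ∃ i ∈ Y \ X, Indep (insert i X)) :
    ∀ (d : ℕ) (X Y : Finset (Fin n)), Y.card - X.card ≤ d → Indep X → Indep Y →
      ∃ Z, Indep Z ∧ X ⊆ Z ∧ Z ⊆ X ∪ Y ∧ Y.card ≤ Z.card := by
  intro d
  induction d with
  | zero =>
      intro X Y hd hX hY
      exact ⟨X, hX, subset_rfl, subset_union_left, Nat.le_of_sub_eq_zero (Nat.le_zero.1 hd)⟩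
  | succ d ih =>
      intro X Y hd hX hY
      by_cases hc : Y.card ≤ X.card
      · exact ⟨X, hX, subset_rfl, subset_union_left, hc⟩
      · push_neg at hc
        obtain ⟨i, hiY, hiX⟩ := hexch X Y hX hY hc
        rw [mem_sdiff] at hiY
        have hcard : (insert i X).card = X.card + 1 := card_insert_of_notMem hiY.2
        obtain ⟨Z, hZ, hXZ, hZsub, hYZ⟩ := ih (insert i X) Y (by omega) hiX hY
        refine ⟨Z, hZ, (subset_insert _ _).trans hXZ, ?_, hYZ⟩
        refine hZsub.trans ?_
        intro x hx
        rcases mem_union.1 hx with hx | hx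
        · rcases mem_insert.1 hx with rfl | hx
          · exact mem_union_right _ hiY.1
          · exact mem_union_left _ hx
        · exact mem_union_right _ hx

lemma augment
    (hexch : ∀ X Y : Finset (Fin n), Indep X → Indep Y → X.card < Y.card →
      ∃ i ∈ Y \ X, Indep (insert i X))
    (X Y : Finset (Fin n)) (hX : Indep X) (hY : Indep Y) :
    ∃ Z, Indep Z ∧ X ⊆ Z ∧ Z ⊆ X ∪ Y ∧ Y.card ≤ Z.card :=
  augment_aux Indep hexch Y.card X Y (Nat.sub_le _ _) hX hY

lemma exists_partner_injection {r : ℕ} (hr : 1 ≤ r)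
    (hhered : ∀ X Y : Finset (Fin n), X ⊆ Y → Indep Y → Indep X)
    (hexch : ∀ X Y : Finset (Fin n), Indep X → Indep Y → X.card < Y.card →
      ∃ i ∈ Y \ X, Indep (insert i X))
    (S T' : Finset (Fin n)) (hSind : Indep S)
    (hSmax : ∀ R : Finset (Fin n), Indep R → R.card ≤ S.card)
    (hScard : S.card = r) (hT'ind : Indep T') :
    ∃ φ : {x // x ∈ T' \ S} → Fin n, Function.Injective φ ∧
      ∀ x, φ x ∈ S ∧ Indep (insert x.1 (S.erase (φ x))) := by
  classical
  set t : {x // x ∈ T' \ S} → Finset (Fin n) :=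
    fun x => S.filter (fun i => Indep (insert x.1 (S.erase i))) with ht
  have hall : ∀ s : Finset {x // x ∈ T' \ S}, s.card ≤ (s.biUnion t).card := by
    intro s
    set X := s.image Subtype.val with hX
    have hXcard : X.card = s.card := card_image_of_injective _ Subtype.val_injective
    have hXsub : X ⊆ T' \ S := by
      intro y hy
      obtain ⟨x, _, rfl⟩ := mem_image.1 hy
      exact x.2
    have hXind : Indep X :=
      hhered X T' (hXsub.trans (sdiff_subset)) hT'ind
    obtain ⟨Z, hZind, hXZ, hZsub, hZcard⟩ := augment Indep hexch X S hXind hSind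
    have hZcard' : Z.card = r := le_antisymm (hScard ▸ hSmax Z hZind) (hScard ▸ hZcard)
    -- S \ Z ⊆ biUnion
    have hSZ : S \ Z ⊆ s.biUnion t := by
      intro i hi
      rw [mem_sdiff] at hi
      have herase : (S.erase i).card < Z.card := by
        rw [card_erase_of_mem hi.1, hScard, hZcard']; omega
      obtain ⟨y, hy, hyind⟩ := hexch (S.erase i) Z
        (hhered _ _ (erase_subset _ _) hSind) hZind herase
      rw [mem_sdiff] at hy
      have hyS : y ∉ S := by
        intro hyS
        rcases eq_or_ne y i with rfl | hne
        · exact hi.2 hy.1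
        · exact hy.2 (mem_erase.2 ⟨hne, hyS⟩)
      have hyX : y ∈ X := by
        rcases mem_union.1 (hZsub hy.1) with h | h
        · exact h
        · exact absurd h hyS
      obtain ⟨x, hxs, hxy⟩ := mem_image.1 hyX
      refine mem_biUnion.2 ⟨x, hxs, ?_⟩
      rw [ht]
      refine mem_filter.2 ⟨hi.1, ?_⟩
      rw [hxy]
      exact hyind
    -- counting
    have h1 : (S \ Z).card + (S ∩ Z).card = S.card := card_sdiff_add_card_inter _ _
    have h2 : (Z \ S).card + (Z ∩ S).card = Z.card := card_sdiff_add_card_inter _ _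
    have hXZS : X ⊆ Z \ S := by
      intro y hy
      exact mem_sdiff.2 ⟨hXZ hy, (mem_sdiff.1 (hXsub hy)).2⟩
    have h3 : X.card ≤ (Z \ S).card := card_le_card hXZS
    have h4 : (S ∩ Z).card = (Z ∩ S).card := by rw [inter_comm]
    have h5 : (S \ Z).card ≤ (s.biUnion t).card := card_le_card hSZ
    omega
  obtain ⟨φ, hinj, hφ⟩ := (Finset.all_card_le_biUnion_card_iff_exists_injective t).1 hall
  refine ⟨φ, hinj, fun x => ?_⟩
  have := hφ x
  rw [ht] at this
  exact ⟨(mem_filter.1 this).1, (mem_filter.1 this).2⟩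

end Matroid


set_option maxHeartbeats 1000000 in
/-- Local search guarantee for non-negative, monotone, γ-meta-submodular,
second-order submodular functions subject to a matroid constraint:
`f(T) ≤ (4γ²/(r−1) + γ(4/(r−1) + 2) + 3 + (1+γ)ε(γ+r−1)/((r−1)n))·f(S)` (the
last term is the `o(1)` term), i.e. an `O(γ + γ²/r)`-approximation. -/
theorem localSearch_secondOrderSubmodular {n r : ℕ} (γ ε : ℝ) (hγ : 0 ≤ γ)
    (hε : 0 < ε) (hn : 1 ≤ n) (hr : 2 ≤ r)
    (f : Finset (Fin n) → ℝ)
    (hnonneg : ∀ S : Finset (Fin n), 0 ≤ f S) (hf0 : f ∅ = 0)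
    (hmono : ∀ S T : Finset (Fin n), S ⊆ T → f S ≤ f T)
    (hms : ∀ S : Finset (Fin n), S.Nonempty → ∀ i j : Fin n,
      (S.card : ℝ) * Adiff f i j S ≤ γ * (Bdiff f i S + Bdiff f j S))
    (h2nd : ∀ (i j k : Fin n) (S : Finset (Fin n)),
      Adiff f i j (insert k S) ≤ Adiff f i j (S.erase k))
    (Indep : Finset (Fin n) → Prop)
    (hempty : Indep ∅)
    (hhered : ∀ X Y : Finset (Fin n), X ⊆ Y → Indep Y → Indep X)
    (hexch : ∀ X Y : Finset (Fin n), Indep X → Indep Y → X.card < Y.card →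
      ∃ i ∈ Y \ X, Indep (insert i X))
    (S T : Finset (Fin n))
    (hSind : Indep S) (hSmax : ∀ R : Finset (Fin n), Indep R → R.card ≤ S.card)
    (hScard : S.card = r)
    (hTind : Indep T) (hTopt : ∀ R : Finset (Fin n), Indep R → f R ≤ f T)
    (hlocal : ∀ i ∈ S, ∀ j : Fin n, j ∉ S → Indep (insert j (S.erase i)) →
      f (insert j (S.erase i)) ≤ (1 + ε / (n : ℝ) ^ 2) * f S) :
    f T ≤ (4 * γ ^ 2 / (r - 1) + γ * (4 / (r - 1) + 2) + 3
        + (1 + γ) * ε * (γ + r - 1) / ((r - 1) * n)) * f S := by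
  classical
  have hrR : (2:ℝ) ≤ (r:ℝ) := by exact_mod_cast hr
  have hr1 : (0:ℝ) < (r:ℝ) - 1 := by linarith
  have hnR : (1:ℝ) ≤ (n:ℝ) := by exact_mod_cast hn
  have hnpos : (0:ℝ) < (n:ℝ) := by linarith
  have hfS : 0 ≤ f S := hnonneg S
  set γ₁ : ℝ := γ / ((r:ℝ) - 1) with hγ₁
  have hγ₁0 : 0 ≤ γ₁ := div_nonneg hγ hr1.le
  set ε' : ℝ := ε / (n:ℝ)^2 with hε'
  have hε'0 : 0 ≤ ε' := by positivity
  -- extend T to a base T'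
  obtain ⟨T', hT'ind, hTT', hT'sub, hT'ge⟩ := augment Indep hexch T S hTind hSind
  have hT'card : T'.card = r := le_antisymm (hScard ▸ hSmax T' hT'ind) (hScard ▸ hT'ge)
  set D := T' \ S with hD
  obtain ⟨φ, hφinj, hφ⟩ := exists_partner_injection Indep (by omega)
    hhered hexch S T' hSind hSmax hScard hT'ind
  have hDS : ∀ k ∈ D, k ∉ S := fun k hk => (mem_sdiff.1 hk).2
  have hmle : D.card ≤ r := by
    have hsub' : D ⊆ T' := by rw [hD]; exact sdiff_subset
    have h := card_le_card hsub'
    omega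
  have hrn : r ≤ n := by
    have h := S.card_le_univ
    rw [hScard] at h
    simpa using h
  have hSne : S.Nonempty := card_pos.1 (by omega)
  -- per-element swap bound
  have hstep : ∀ x : {x // x ∈ D}, Bdiff f x.1 S ≤
      (1 + 2*γ₁) * Bdiff f (φ x) S + (1 + γ₁) * ε' * f S := by
    intro x
    obtain ⟨hφS, hφind⟩ := hφ x
    have hjS : x.1 ∉ S := (mem_sdiff.1 x.2).2
    have hij : x.1 ≠ φ x := fun h => hjS (h ▸ hφS)
    have hiSe : φ x ∉ S.erase (φ x) := notMem_erase _ _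
    have hjSe : x.1 ∉ S.erase (φ x) := fun h => hjS (mem_of_mem_erase h)
    have hloc := hlocal (φ x) hφS x.1 hjS hφind
    have hBi : Bdiff f (φ x) S = f S - f (S.erase (φ x)) := b_mem _ hφS
    have hBjSe : Bdiff f x.1 (S.erase (φ x)) =
        f (insert x.1 (S.erase (φ x))) - f (S.erase (φ x)) := b_not_mem _ hjSe
    have hA : Bdiff f x.1 (S.erase (φ x)) ≤ Bdiff f (φ x) S + ε' * f S := by
      have he : (1 + ε / (n:ℝ)^2) * f S = f S + ε' * f S := by rw [hε']; ring
      rw [hBjSe, hBi]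
      linarith [hloc, he.le]
    have hcard : ((S.erase (φ x)).card : ℝ) = (r:ℝ) - 1 := by
      rw [card_erase_of_mem hφS, hScard]
      push_cast [Nat.cast_sub (by omega : 1 ≤ r)]
      ring
    have hne : (S.erase (φ x)).Nonempty := by
      rw [← card_pos, card_erase_of_mem hφS, hScard]; omega
    have hmsA := hms (S.erase (φ x)) hne x.1 (φ x)
    have hBii : Bdiff f (φ x) (S.erase (φ x)) = Bdiff f (φ x) S := by
      unfold Bdiff
      rw [insert_erase hφS, erase_eq_of_notMem (notMem_erase _ _),
        insert_eq_self.2 hφS]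
    rw [hcard, hBii] at hmsA
    have hAle : Adiff f x.1 (φ x) (S.erase (φ x)) ≤
        γ₁ * (Bdiff f x.1 (S.erase (φ x)) + Bdiff f (φ x) S) := by
      rw [hγ₁, div_mul_eq_mul_div, le_div_iff₀ hr1]
      linarith [hmsA]
    have hsplit : Bdiff f x.1 S =
        Bdiff f x.1 (S.erase (φ x)) + Adiff f x.1 (φ x) (S.erase (φ x)) := by
      have h := bsucc (f := f) hjSe hiSe hij
      rwa [insert_erase hφS] at h
    have e1 : γ₁ * (Bdiff f x.1 (S.erase (φ x)) + Bdiff f (φ x) S)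
        = γ₁ * Bdiff f x.1 (S.erase (φ x)) + γ₁ * Bdiff f (φ x) S := by ring
    have e2 : (1 + γ₁) * (Bdiff f (φ x) S + ε' * f S)
        = Bdiff f (φ x) S + γ₁ * Bdiff f (φ x) S + (1+γ₁) * ε' * f S := by ring
    have e3 : (1 + 2*γ₁) * Bdiff f (φ x) S
        = Bdiff f (φ x) S + γ₁ * Bdiff f (φ x) S + γ₁ * Bdiff f (φ x) S := by ring
    have h4 : γ₁ * Bdiff f x.1 (S.erase (φ x)) ≤
        γ₁ * (Bdiff f (φ x) S + ε' * f S) := mul_le_mul_of_nonneg_left hA hγ₁0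
    have e5 : γ₁ * (Bdiff f (φ x) S + ε' * f S)
        = γ₁ * Bdiff f (φ x) S + γ₁ * (ε' * f S) := by ring
    have h6 : 0 ≤ γ₁ * (ε' * f S) := by positivity
    linarith [hsplit, hAle, hA, e1, e2.le, e3.le, h4, e5.le, h6]
  -- sum over D
  have hsum1 : ∑ j ∈ D, Bdiff f j S = ∑ x ∈ D.attach, Bdiff f x.1 S :=
    (Finset.sum_attach D _).symm
  have himg : ∑ i ∈ D.attach.image φ, Bdiff f i S
      = ∑ x ∈ D.attach, Bdiff f (φ x) S :=
    Finset.sum_image (fun x _ y _ h => hφinj h)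
  have hsub : D.attach.image φ ⊆ S := by
    intro i hi
    obtain ⟨x, _, rfl⟩ := mem_image.1 hi
    exact (hφ x).1
  have hsum2 : ∑ x ∈ D.attach, Bdiff f (φ x) S ≤ 2 * f S := by
    rw [← himg]
    exact le_trans
      (sum_le_sum_of_subset_of_nonneg hsub (fun i _ _ => b_nonneg hmono i S))
      (key_lemma hnonneg hmono h2nd S)
  have hSig : ∑ j ∈ D, Bdiff f j S ≤
      (1+2*γ₁) * (2 * f S) + (D.card : ℝ) * ((1+γ₁)*ε'*f S) := by
    rw [hsum1]
    calc ∑ x ∈ D.attach, Bdiff f x.1 S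
        ≤ ∑ x ∈ D.attach, ((1 + 2*γ₁) * Bdiff f (φ x) S + (1+γ₁)*ε'*f S) :=
          Finset.sum_le_sum (fun x _ => hstep x)
      _ = (1+2*γ₁) * ∑ x ∈ D.attach, Bdiff f (φ x) S
            + (D.card : ℝ) * ((1+γ₁)*ε'*f S) := by
          rw [Finset.sum_add_distrib, ← Finset.mul_sum, Finset.sum_const,
            card_attach, nsmul_eq_mul]
      _ ≤ (1+2*γ₁) * (2 * f S) + (D.card : ℝ) * ((1+γ₁)*ε'*f S) := by
          have := mul_le_mul_of_nonneg_left hsum2 (by linarith : (0:ℝ) ≤ 1+2*γ₁)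
          linarith
  -- growth
  have hgrow := growth hγ hms h2nd S hSne D hDS
  have hST : S ∪ D = S ∪ T' := union_sdiff_self_eq_union
  have hfT : f T ≤ f (S ∪ D) := by
    refine hmono T (S ∪ D) ?_
    rw [hST]
    exact hTT'.trans subset_union_right
  have hSig0 : 0 ≤ ∑ j ∈ D, Bdiff f j S :=
    Finset.sum_nonneg (fun j _ => b_nonneg hmono j S)
  have hcoef : 1 + γ * ((D.card : ℝ) - 1) / S.card ≤ 1 + γ := by
    rw [hScard]
    have hmr : (D.card : ℝ) ≤ (r:ℝ) := by exact_mod_cast hmle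
    have hrpos : (0:ℝ) < (r:ℝ) := by linarith
    have : γ * ((D.card:ℝ)-1) / (r:ℝ) ≤ γ := by
      rw [div_le_iff₀ hrpos]
      nlinarith
    linarith
  have h5 : f T ≤ f S + (1+γ) * ∑ j ∈ D, Bdiff f j S := by
    have h := mul_le_mul_of_nonneg_right hcoef hSig0
    linarith [hgrow, hfT, h]
  -- bound the ε'-term
  have hmε : (D.card : ℝ) * ((1+γ₁)*ε'*f S) ≤ (1+γ₁) * (ε/(n:ℝ)) * f S := by
    have hmn : (D.card : ℝ) ≤ (n:ℝ) := by exact_mod_cast le_trans hmle hrn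
    have hm0 : (0:ℝ) ≤ (D.card : ℝ) := by positivity
    have hkey : (D.card : ℝ) * ε' ≤ ε/(n:ℝ) := by
      have e : (D.card:ℝ) * (ε / (n:ℝ)^2) = ((D.card:ℝ) * ε) / (n:ℝ)^2 := by ring
      rw [hε', e, div_le_div_iff₀ (by positivity) hnpos]
      nlinarith [mul_nonneg (mul_nonneg (sub_nonneg.2 hmn) hε.le) hnpos.le]
    calc (D.card : ℝ) * ((1+γ₁)*ε'*f S) = ((D.card : ℝ) * ε') * ((1+γ₁) * f S) := by
          ring
      _ ≤ (ε/(n:ℝ)) * ((1+γ₁) * f S) :=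
          mul_le_mul_of_nonneg_right hkey (by positivity)
      _ = (1+γ₁) * (ε/(n:ℝ)) * f S := by ring
  have h6 : ∑ j ∈ D, Bdiff f j S ≤ (2*(1+2*γ₁) + (1+γ₁)*(ε/(n:ℝ))) * f S := by
    have e : (2*(1+2*γ₁) + (1+γ₁)*(ε/(n:ℝ))) * f S
        = (1+2*γ₁) * (2 * f S) + (1+γ₁) * (ε/(n:ℝ)) * f S := by ring
    linarith [hSig, hmε, e.le]
  have h7 : f T ≤ f S + (1+γ) * ((2*(1+2*γ₁) + (1+γ₁)*(ε/(n:ℝ))) * f S) := by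
    have h := mul_le_mul_of_nonneg_left h6 (by linarith : (0:ℝ) ≤ 1+γ)
    linarith [h5, h]
  have hfinal : (4 * γ ^ 2 / ((r:ℝ) - 1) + γ * (4 / ((r:ℝ) - 1) + 2) + 3
        + (1 + γ) * ε * (γ + (r:ℝ) - 1) / (((r:ℝ) - 1) * (n:ℝ)))
      = 1 + (1+γ) * (2*(1+2*γ₁) + (1+γ₁)*(ε/(n:ℝ))) := by
    have hne1 : (r:ℝ) - 1 ≠ 0 := ne_of_gt hr1
    have hne2 : (n:ℝ) ≠ 0 := ne_of_gt hnpos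
    rw [hγ₁]
    field_simp
    ring
  have e8 : (1 + (1+γ) * (2*(1+2*γ₁) + (1+γ₁)*(ε/(n:ℝ)))) * f S
      = f S + (1+γ) * ((2*(1+2*γ₁) + (1+γ₁)*(ε/(n:ℝ))) * f S) := by ring
  calc f T ≤ f S + (1+γ) * ((2*(1+2*γ₁) + (1+γ₁)*(ε/(n:ℝ))) * f S) := h7
    _ = (1 + (1+γ) * (2*(1+2*γ₁) + (1+γ₁)*(ε/(n:ℝ)))) * f S := e8.symm
    _ = (4 * γ ^ 2 / ((r:ℝ) - 1) + γ * (4 / ((r:ℝ) - 1) + 2) + 3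
        + (1 + γ) * ε * (γ + (r:ℝ) - 1) / (((r:ℝ) - 1) * (n:ℝ))) * f S := by
        rw [hfinal]
end
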